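/- arXiv:2306.09809 — 2 statements merged into one kernel-verified Lean document; each statement's English description precedes it below -/
import Mathlib

section
/- If κ is a cardinal such that there exists a maximal independent family of subsets of ℕ of cardinality κ, then there exists a densely maximal independent family of subsets of ℕ of cardinality κ. -/
open Set

/-- A family of subsets of ℕ is *independent* if all its members are infinite and
for all finite disjoint subfamilies `𝒜, ℬ ⊆ I` the set `⋂ 𝒜 \ ⋃ ℬ` is infinite. -/
def Indep (I : Set (Set ℕ)) : Prop :=
  (∀ A ∈ I, A.Infinite) ∧
  ∀ 𝒜 ℬ : Finset (Set ℕ), ↑𝒜 ⊆ I → ↑ℬ ⊆ I → Disjoint 𝒜 ℬ →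
    ((⋂ A ∈ 𝒜, A) \ (⋃ B ∈ ℬ, B)).Infinite

/-- `FF I h` : `h` is a finite partial function from `I` to `2`, coded as a finitely
supported `Option Bool`-valued function whose support consists of members of `I`. -/
def FF (I : Set (Set ℕ)) (h : Set ℕ → Option Bool) : Prop :=
  {A | h A ≠ none}.Finite ∧ ∀ A : Set ℕ, h A ≠ none → A ∈ I

/-- The Boolean combination `I^h` : intersection over the domain of `h` of `A` (if
`h A = some false`, i.e. `h(A) = 0`) or of its complement (if `h A = some true`). -/
def BC (h : Set ℕ → Option Bool) : Set ℕ :=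
  ⋂ A ∈ {A : Set ℕ | h A ≠ none}, (if h A = some false then A else Aᶜ)

/-- `ExtFF h h'` : the finite partial function `h'` extends `h`. -/
def ExtFF (h h' : Set ℕ → Option Bool) : Prop :=
  ∀ (A : Set ℕ) (b : Bool), h A = some b → h' A = some b

/-- `I` is densely maximal: for every infinite `X ⊆ ℕ` and every `h ∈ FF(I)` there is
`h' ⊇ h` in `FF(I)` with `I^{h'} \ X` finite or `I^{h'} ∩ X` finite. -/
def DenselyMax (I : Set (Set ℕ)) : Prop :=
  ∀ X : Set ℕ, X.Infinite → ∀ h, FF I h →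
    ∃ h', FF I h' ∧ ExtFF h h' ∧ ((BC h' \ X).Finite ∨ (BC h' ∩ X).Finite)

/-- The density filter `fil(I)`. -/
def densityFil (I : Set (Set ℕ)) : Set (Set ℕ) :=
  {X | ∀ h, FF I h → ∃ h', FF I h' ∧ ExtFF h h' ∧ (BC h' \ X).Finite}

/-- `I` is a maximal independent family. -/
def MaxIndep (I : Set (Set ℕ)) : Prop :=
  Indep I ∧ ¬ ∃ X : Set ℕ, X.Infinite ∧ X ∉ I ∧ Indep (insert X I)

/-- A proper filter on ℕ, viewed as a collection of subsets of ℕ. -/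
def ProperFilter (F : Set (Set ℕ)) : Prop :=
  ∅ ∉ F ∧ Set.univ ∈ F ∧ (∀ X ∈ F, ∀ Y : Set ℕ, X ⊆ Y → Y ∈ F) ∧
    ∀ X ∈ F, ∀ Y ∈ F, X ∩ Y ∈ F

/-- Every member of `F` has infinite intersection with every Boolean combination of `I`. -/
def DiagProp (I : Set (Set ℕ)) (F : Set (Set ℕ)) : Prop :=
  ∀ X ∈ F, ∀ h, FF I h → (X ∩ BC h).Infinite

/-- `F` is a diagonalization filter for `I` : a proper filter, maximal under inclusion
among proper filters all of whose members meet every Boolean combination infinitely. -/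
def DiagFilter (I F : Set (Set ℕ)) : Prop :=
  ProperFilter F ∧ DiagProp I F ∧
    ∀ G : Set (Set ℕ), ProperFilter G → DiagProp I G → F ⊆ G → G = F

/-- `F` is a P-filter (as a collection of sets): every countable subfamily has a
pseudointersection in `F`. -/
def IsPFilter (F : Set (Set ℕ)) : Prop :=
  ∀ A : ℕ → Set ℕ, (∀ n, A n ∈ F) → ∃ B ∈ F, ∀ n, (B \ A n).Finite

/-- `F` is a Q-filter: every partition of ℕ into finite sets has a semiselector in `F`. -/
def IsQFilter (F : Set (Set ℕ)) : Prop :=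
  ∀ J : ℕ → Set ℕ, (∀ n, (J n).Finite) → (∀ m n, m ≠ n → Disjoint (J m) (J n)) →
    (⋃ n, J n) = Set.univ → ∃ A ∈ F, ∀ n, (A ∩ J n).Subsingleton

/-- An independent family is selective if it is densely maximal and its density filter
is Ramsey (both a P-filter and a Q-filter). -/
def Selective (I : Set (Set ℕ)) : Prop :=
  Indep I ∧ DenselyMax I ∧ IsPFilter (densityFil I) ∧ IsQFilter (densityFil I)

/-!
Call a condition `g ∈ FF(I)` splitting if some `X` splits (into two infinite parts) every
Boolean combination below `g`. If splitting conditions were dense, the sets `X_g ∩ I^g`, for `g`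
ranging over a maximal antichain of splitting conditions, would glue to one set splitting every
Boolean combination of `I`, which could then be added to `I`. So for maximal `I` some `h` has no
splitting condition below it: below `h` every set is decided densely. The traces
`A ∩ I^h`, `A ∈ I \ dom h`, then form a densely maximal independent family, and it has the
cardinality of `I` because `I` is infinite (a finite `I` has a condition without proper
extensions, and its infinite Boolean combination can be split).
-/

/-- The paper's `A^i`, extended by `univ` outside the domain of a condition. -/
def literal (A : Set ℕ) : Option Bool → Set ℕ
  | none => univ
  | some false => A
  | some true => Aᶜ

@[simp] lemma literal_none (A : Set ℕ) : literal A none = univ := rfl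
@[simp] lemma literal_some_false (A : Set ℕ) : literal A (some false) = A := rfl
@[simp] lemma literal_some_true (A : Set ℕ) : literal A (some true) = Aᶜ := rfl

lemma mem_literal_inter {A D : Set ℕ} {x : ℕ} (hx : x ∈ D) (o : Option Bool) :
    x ∈ literal (A ∩ D) o ↔ x ∈ literal A o := by
  rcases o with _ | _ | _ <;> simp [hx]

lemma mem_BC {h : Set ℕ → Option Bool} {x : ℕ} : x ∈ BC h ↔ ∀ A, x ∈ literal A (h A) := by
  simp only [BC, mem_iInter, mem_ofPred_eq]
  refine forall_congr' fun A => ?_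
  rcases h A with _ | _ | _ <;> simp

lemma BC_empty : BC (fun _ => none) = univ := by
  ext; simp [mem_BC]

lemma BC_anti {h h' : Set ℕ → Option Bool} (e : ExtFF h h') : BC h' ⊆ BC h := by
  intro x hx
  rw [mem_BC] at hx ⊢
  intro A
  rcases hA : h A with _ | b
  · simp
  · simpa [e A b hA] using hx A

lemma ExtFF.trans {h₁ h₂ h₃ : Set ℕ → Option Bool} (e₁ : ExtFF h₁ h₂) (e₂ : ExtFF h₂ h₃) :
    ExtFF h₁ h₃ :=
  fun A b hb => e₂ A b (e₁ A b hb)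

lemma FF.mono {I I' : Set (Set ℕ)} {h : Set ℕ → Option Bool} (hh : FF I h) (hI : I ⊆ I') :
    FF I' h :=
  ⟨hh.1, fun A hA => hI (hh.2 A hA)⟩

lemma FF_empty (I : Set (Set ℕ)) : FF I (fun _ => none) := by
  simp [FF]

lemma FF_update {I : Set (Set ℕ)} {h : Set ℕ → Option Bool} (hh : FF I h) {B : Set ℕ}
    (hB : B ∈ I) (o : Option Bool) : FF I (Function.update h B o) := by
  refine ⟨(hh.1.insert B).subset fun A hA => ?_, fun A hA => ?_⟩ <;> by_cases hAB : A = B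
  · exact .inl hAB
  · exact .inr (by simpa [Function.update_of_ne hAB] using hA)
  · exact hAB ▸ hB
  · exact hh.2 A (by simpa [Function.update_of_ne hAB] using hA)

lemma extFF_update {h : Set ℕ → Option Bool} {B : Set ℕ} (hB : h B = none) (o : Option Bool) :
    ExtFF h (Function.update h B o) := by
  intro A b hb
  have hAB : A ≠ B := by rintro rfl; simp_all
  rwa [Function.update_of_ne hAB]

lemma BC_eq_literal_inter_BC_update (h : Set ℕ → Option Bool) (B : Set ℕ) :
    BC h = literal B (h B) ∩ BC (Function.update h B none) := by
  ext x
  simp only [mem_BC, mem_inter_iff]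
  refine ⟨fun H => ⟨H B, fun A => ?_⟩, fun ⟨hB, H⟩ A => ?_⟩ <;> by_cases hA : A = B
  · simp [hA]
  · simpa [Function.update_of_ne hA] using H A
  · exact hA ▸ hB
  · simpa [Function.update_of_ne hA] using H A

def Compat (g₁ g₂ : Set ℕ → Option Bool) : Prop :=
  ∀ A b₁ b₂, g₁ A = some b₁ → g₂ A = some b₂ → b₁ = b₂

lemma Compat.symm {g₁ g₂ : Set ℕ → Option Bool} (hc : Compat g₁ g₂) : Compat g₂ g₁ :=
  fun A b₁ b₂ h₁ h₂ => (hc A b₂ b₁ h₂ h₁).symm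

lemma Compat.of_extFF_left {g₁ g₁' g₂ : Set ℕ → Option Bool} (hc : Compat g₁' g₂)
    (e : ExtFF g₁ g₁') : Compat g₁ g₂ :=
  fun A b₁ b₂ h₁ h₂ => hc A b₁ b₂ (e A b₁ h₁) h₂

lemma compat_self (g : Set ℕ → Option Bool) : Compat g g := by
  intro A b₁ b₂ h₁ h₂
  simpa [h₁] using h₂

lemma disjoint_BC_of_not_compat {g₁ g₂ : Set ℕ → Option Bool} (hc : ¬ Compat g₁ g₂) :
    Disjoint (BC g₁) (BC g₂) := by
  simp only [Compat, not_forall] at hc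
  obtain ⟨A, b₁, b₂, h₁, h₂, hne⟩ := hc
  refine disjoint_left.2 fun x hx₁ hx₂ => ?_
  have l₁ := mem_BC.1 hx₁ A
  have l₂ := mem_BC.1 hx₂ A
  rw [h₁] at l₁
  rw [h₂] at l₂
  cases b₁ <;> cases b₂ <;> simp_all

def unionFF (g₁ g₂ : Set ℕ → Option Bool) : Set ℕ → Option Bool :=
  fun A => (g₁ A).or (g₂ A)

lemma FF_unionFF {I : Set (Set ℕ)} {g₁ g₂ : Set ℕ → Option Bool} (h₁ : FF I g₁)
    (h₂ : FF I g₂) : FF I (unionFF g₁ g₂) := by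
  refine ⟨(h₁.1.union h₂.1).subset fun A hA => ?_, fun A hA => ?_⟩ <;>
    rcases h : g₁ A with _ | b
  all_goals simp_all [unionFF]
  · exact h₂.2 A hA
  · exact h₁.2 A (by simp [h])

lemma extFF_unionFF_left (g₁ g₂ : Set ℕ → Option Bool) : ExtFF g₁ (unionFF g₁ g₂) := by
  intro A b hb
  simp [unionFF, hb]

lemma BC_unionFF {g₁ g₂ : Set ℕ → Option Bool} (hc : Compat g₁ g₂) :
    BC (unionFF g₁ g₂) = BC g₁ ∩ BC g₂ := by
  ext x
  simp only [mem_BC, mem_inter_iff, ← forall_and]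
  refine forall_congr' fun A => ?_
  rcases h₁ : g₁ A with _ | b₁ <;> rcases h₂ : g₂ A with _ | b₂ <;> simp [unionFF, h₁, h₂]
  simp [hc A b₁ b₂ h₁ h₂]

open Classical in
noncomputable def condOfFinsets (𝒜 ℬ : Finset (Set ℕ)) : Set ℕ → Option Bool :=
  fun A => if A ∈ 𝒜 then some false else if A ∈ ℬ then some true else none

lemma FF_condOfFinsets {I : Set (Set ℕ)} {𝒜 ℬ : Finset (Set ℕ)} (h𝒜 : ↑𝒜 ⊆ I) (hℬ : ↑ℬ ⊆ I) :
    FF I (condOfFinsets 𝒜 ℬ) := by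
  refine ⟨(𝒜 ∪ ℬ).finite_toSet.subset fun A hA => ?_, fun A hA => ?_⟩ <;>
    by_cases h₁ : A ∈ 𝒜 <;> by_cases h₂ : A ∈ ℬ <;> simp_all [condOfFinsets]
  exacts [h𝒜 h₁, h𝒜 h₁, hℬ h₂]

lemma BC_condOfFinsets {𝒜 ℬ : Finset (Set ℕ)} (hd : Disjoint 𝒜 ℬ) :
    BC (condOfFinsets 𝒜 ℬ) = (⋂ A ∈ 𝒜, A) \ ⋃ B ∈ ℬ, B := by
  ext x
  simp only [mem_BC, mem_sdiff, mem_iInter₂, mem_iUnion₂, not_exists]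
  refine ⟨fun H => ⟨fun A hA => by simpa [condOfFinsets, hA] using H A, fun B hB => ?_⟩,
    fun ⟨H₁, H₂⟩ A => ?_⟩
  · simpa [condOfFinsets, hB, Finset.disjoint_right.1 hd hB] using H B
  · by_cases h₁ : A ∈ 𝒜 <;> by_cases h₂ : A ∈ ℬ <;> simp [condOfFinsets, *]

lemma exists_eq_condOfFinsets {h : Set ℕ → Option Bool} (hfin : {A | h A ≠ none}.Finite) :
    ∃ 𝒜 ℬ : Finset (Set ℕ), ↑𝒜 ∪ ↑ℬ ⊆ {A | h A ≠ none} ∧ Disjoint 𝒜 ℬ ∧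
      h = condOfFinsets 𝒜 ℬ := by
  refine ⟨(hfin.subset (t := {A | h A = some false}) (by simp +contextual)).toFinset,
    (hfin.subset (t := {A | h A = some true}) (by simp +contextual)).toFinset,
    fun A hA => ?_, Finset.disjoint_left.2 fun A h₁ h₂ => ?_, funext fun A => ?_⟩
  · rcases hA with hA | hA <;> simp_all
  · simp_all
  · rcases h' : h A with _ | _ | _ <;> simp [condOfFinsets, h']

lemma indep_iff_forall_FF {I : Set (Set ℕ)} : Indep I ↔ ∀ h, FF I h → (BC h).Infinite := by
  constructor
  · rintro hI h hh
    obtain ⟨𝒜, ℬ, hsupp, hd, rfl⟩ := exists_eq_condOfFinsets hh.1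
    rw [BC_condOfFinsets hd]
    exact hI.2 𝒜 ℬ (fun A hA => hh.2 A (hsupp (.inl hA)))
      (fun B hB => hh.2 B (hsupp (.inr hB))) hd
  · intro H
    refine ⟨fun A hA => ?_, fun 𝒜 ℬ h𝒜 hℬ hd => ?_⟩
    · have := H _ (FF_condOfFinsets (𝒜 := {A}) (ℬ := ∅) (by simpa using hA) (by simp))
      simpa [BC_condOfFinsets] using this
    · simpa [BC_condOfFinsets hd] using H _ (FF_condOfFinsets h𝒜 hℬ)

def Splits (S X : Set ℕ) : Prop :=
  (S \ X).Infinite ∧ (S ∩ X).Infinite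

lemma Splits.mono {S T X : Set ℕ} (h : Splits S X) (hST : S ⊆ T) : Splits T X :=
  ⟨h.1.mono (sdiff_subset_sdiff_left hST), h.2.mono (inter_subset_inter_left X hST)⟩

lemma Splits.of_inter_eq {S X Y : Set ℕ} (h : Splits S X) (hXY : S ∩ X = S ∩ Y) : Splits S Y := by
  have hdiff : S \ Y = S \ X := by rw [← sdiff_self_inter, ← hXY, sdiff_self_inter]
  exact ⟨hdiff ▸ h.1, hXY ▸ h.2⟩

lemma not_splits_iff {S X : Set ℕ} : ¬ Splits S X ↔ (S \ X).Finite ∨ (S ∩ X).Finite := by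
  simp only [Splits, not_and_or, not_infinite]

lemma FF_update_none_of_insert {I : Set (Set ℕ)} {h : Set ℕ → Option Bool} {B : Set ℕ}
    (hh : FF (insert B I) h) : FF I (Function.update h B none) := by
  refine ⟨hh.1.subset fun A hA => ?_, fun A hA => ?_⟩ <;> by_cases hAB : A = B
  · simp [hAB] at hA
  · simpa [Function.update_of_ne hAB] using hA
  · simp [hAB] at hA
  · rw [Function.update_of_ne hAB] at hA
    exact (hh.2 A hA).resolve_left hAB

lemma indep_insert_of_splits {I : Set (Set ℕ)} {X : Set ℕ} (hX : ∀ h, FF I h → Splits (BC h) X) :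
    Indep (insert X I) := by
  refine indep_iff_forall_FF.2 fun γ hγ => ?_
  obtain ⟨hout, hin⟩ := hX _ (FF_update_none_of_insert hγ)
  rw [BC_eq_literal_inter_BC_update γ X]
  rcases γ X with _ | _ | _
  · simpa using hin.mono inter_subset_left
  · simpa [inter_comm] using hin
  · simpa [inter_comm, sdiff_eq] using hout

lemma MaxIndep.exists_not_splits {I : Set (Set ℕ)} (hI : MaxIndep I) (X : Set ℕ) :
    ∃ h, FF I h ∧ ¬ Splits (BC h) X := by
  by_contra! H
  refine hI.2 ⟨X, ?_, fun hXI => ?_, indep_insert_of_splits H⟩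
  · simpa [BC_empty] using (H _ (FF_empty I)).2
  · have := (H _ (FF_condOfFinsets (𝒜 := {X}) (ℬ := ∅) (by simpa using hXI) (by simp))).1
    simp [BC_condOfFinsets] at this

def SplitsBelow (I : Set (Set ℕ)) (g : Set ℕ → Option Bool) (X : Set ℕ) : Prop :=
  ∀ g', FF I g' → ExtFF g g' → Splits (BC g') X

def DenselyMaxBelow (I : Set (Set ℕ)) (h : Set ℕ → Option Bool) : Prop :=
  ∀ X g, FF I g → ExtFF h g → ∃ g', FF I g' ∧ ExtFF g g' ∧ ¬ Splits (BC g') X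

lemma exists_maximal_pairwise_subset {α : Type*} (S : Set α) (r : α → α → Prop) :
    ∃ P, Maximal (fun P => P ⊆ S ∧ P.Pairwise r) P :=
  zorn_subset _ fun c hcS hc => ⟨⋃₀ c, ⟨sUnion_subset fun _ hs => (hcS hs).1,
    (pairwise_sUnion hc.directedOn).2 fun _ hs => (hcS hs).2⟩, fun _ => subset_sUnion_of_mem⟩

/-- Gluing the local splitters along a maximal antichain of conditions yields a global one. -/
lemma exists_splits_all_of_dense {I : Set (Set ℕ)}
    (hdense : ∀ γ, FF I γ → ∃ g X, FF I g ∧ ExtFF γ g ∧ SplitsBelow I g X) :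
    ∃ X, ∀ γ, FF I γ → Splits (BC γ) X := by
  obtain ⟨P, hP⟩ := exists_maximal_pairwise_subset
    {p : (Set ℕ → Option Bool) × Set ℕ | FF I p.1 ∧ SplitsBelow I p.1 p.2}
    (fun p q => ¬ Compat p.1 q.1)
  refine ⟨⋃ q ∈ P, BC q.1 ∩ q.2, fun γ hγ => ?_⟩
  obtain ⟨p, hpP, hcompat⟩ : ∃ p ∈ P, Compat p.1 γ := by
    by_contra! H
    obtain ⟨g, X, hg, hγg, hgX⟩ := hdense γ hγ
    have hgP : (g, X) ∈ P := hP.mem_of_prop_insert ⟨insert_subset ⟨hg, hgX⟩ hP.prop.1,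
      hP.prop.2.insert fun q hq _ => ⟨fun hc => H q hq (hc.of_extFF_left hγg).symm,
        fun hc => H q hq (hc.symm.of_extFF_left hγg).symm⟩⟩
    exact H _ hgP ((compat_self g).of_extFF_left hγg).symm
  obtain ⟨hpFF, hpX⟩ := hP.prop.1 hpP
  have hBC : BC (unionFF p.1 γ) = BC p.1 ∩ BC γ := BC_unionFF hcompat
  refine ((hpX _ (FF_unionFF hpFF hγ) (extFF_unionFF_left _ _)).of_inter_eq ?_).mono
    (hBC ▸ inter_subset_right)
  ext x
  simp only [hBC, mem_inter_iff, mem_iUnion, exists_prop]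
  refine ⟨fun ⟨hx, hxp⟩ => ⟨hx, p, hpP, hx.1, hxp⟩, fun ⟨hx, q, hqP, hxq, hxq'⟩ => ⟨hx, ?_⟩⟩
  by_cases hqp : q = p
  · exact hqp ▸ hxq'
  · have hdisj := disjoint_BC_of_not_compat (hP.prop.2 hpP hqP (Ne.symm hqp))
    exact absurd hxq (disjoint_left.1 hdisj hx.1)

lemma MaxIndep.exists_denselyMaxBelow {I : Set (Set ℕ)} (hI : MaxIndep I) :
    ∃ h, FF I h ∧ DenselyMaxBelow I h := by
  by_contra! H
  have hdense : ∀ γ, FF I γ → ∃ g X, FF I g ∧ ExtFF γ g ∧ SplitsBelow I g X := by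
    intro γ hγ
    simp only [DenselyMaxBelow, not_forall, not_exists, not_and, not_not] at H
    obtain ⟨X, g, hg, hγg, hgX⟩ := H γ hγ
    exact ⟨g, X, hg, hγg, hgX⟩
  obtain ⟨X, hX⟩ := exists_splits_all_of_dense hdense
  obtain ⟨h, hh, hnot⟩ := hI.exists_not_splits X
  exact hnot (hX h hh)

lemma Set.Infinite.exists_splits {S : Set ℕ} (hS : S.Infinite) : ∃ X, Splits S X := by
  set e := hS.natEmbedding
  have he : Function.Injective fun n => (e n : ℕ) := Subtype.val_injective.comp e.injective
  refine ⟨range fun n => (e (2 * n) : ℕ), ?_, ?_⟩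
  · refine infinite_of_injective_forall_mem (f := fun n => (e (2 * n + 1) : ℕ))
      (fun m n hmn => by simpa using he hmn) fun n => ⟨(e _).2, ?_⟩
    rintro ⟨m, hm⟩
    have := he hm
    omega
  · exact infinite_of_injective_forall_mem (f := fun n => (e (2 * n) : ℕ))
      (fun m n hmn => by simpa using he hmn) fun n => ⟨(e _).2, n, rfl⟩

lemma MaxIndep.infinite {I : Set (Set ℕ)} (hI : MaxIndep I) : I.Infinite := by
  classical
  intro hfin
  obtain ⟨h, hh, hDM⟩ := hI.exists_denselyMaxBelow
  -- a condition with domain all of `I`: it has no proper extension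
  set g : Set ℕ → Option Bool := fun A => if A ∈ I then (h A).or (some false) else none
  have hg : FF I g := by
    refine ⟨hfin.subset fun A hA => ?_, fun A hA => ?_⟩ <;> by_contra hAI <;> simp [g, hAI] at hA
  have hhg : ExtFF h g := fun A b hb => by simp [g, hh.2 A (by simp [hb]), hb]
  have hg_max : ∀ g', FF I g' → ExtFF g g' → g' = g := by
    intro g' hg' hgg'
    funext A
    by_cases hAI : A ∈ I
    · obtain ⟨b, hb⟩ : ∃ b, g A = some b := by
        rcases h A with _ | b <;> simp [g, hAI]
      rw [hb, hgg' A b hb]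
    · by_contra hne
      exact hAI (hg'.2 A (by simpa [g, hAI] using hne))
  obtain ⟨X, hX⟩ := (indep_iff_forall_FF.1 hI.1 g hg).exists_splits
  obtain ⟨g', hg', hgg', hnot⟩ := hDM X g hg hhg
  exact hnot (hg_max g' hg' hgg' ▸ hX)

open Classical in
noncomputable def restrictFF (s : Set (Set ℕ)) (γ : Set ℕ → Option Bool) :
    Set ℕ → Option Bool :=
  fun A => if A ∈ s then γ A else none

lemma restrictFF_of_mem {s : Set (Set ℕ)} {A : Set ℕ} (hA : A ∈ s) (γ : Set ℕ → Option Bool) :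
    restrictFF s γ A = γ A := by
  simp [restrictFF, hA]

lemma restrictFF_of_notMem {s : Set (Set ℕ)} {A : Set ℕ} (hA : A ∉ s) (γ : Set ℕ → Option Bool) :
    restrictFF s γ A = none := by
  simp [restrictFF, hA]

lemma mem_of_restrictFF_ne_none {s : Set (Set ℕ)} {γ : Set ℕ → Option Bool} {A : Set ℕ}
    (hA : restrictFF s γ A ≠ none) : A ∈ s := by
  by_contra h
  exact hA (restrictFF_of_notMem h γ)

lemma FF_restrictFF {s : Set (Set ℕ)} {γ : Set ℕ → Option Bool}
    (hγ : {A | γ A ≠ none}.Finite) : FF s (restrictFF s γ) :=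
  ⟨hγ.subset fun A hA => by simpa [restrictFF_of_mem (mem_of_restrictFF_ne_none hA)] using hA,
    fun _ => mem_of_restrictFF_ne_none⟩

lemma FF_restrictFF_comp {s : Set (Set ℕ)} {t : Set ℕ → Set ℕ} (ht : InjOn t s)
    {g : Set ℕ → Option Bool} (hg : FF (t '' s) g) : FF s (restrictFF s (g ∘ t)) := by
  refine ⟨Finite.of_finite_image (hg.1.subset ?_) (ht.mono fun A hA => ?_),
    fun _ => mem_of_restrictFF_ne_none⟩
  · rintro _ ⟨A, hA, rfl⟩
    simpa [restrictFF_of_mem (mem_of_restrictFF_ne_none hA)] using hA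
  · exact mem_of_restrictFF_ne_none hA

lemma exists_restrictFF_comp_eq {s : Set (Set ℕ)} {t : Set ℕ → Set ℕ} (ht : InjOn t s)
    {γ : Set ℕ → Option Bool} (hγ : FF s γ) :
    ∃ g, FF (t '' s) g ∧ restrictFF s (g ∘ t) = γ := by
  refine ⟨restrictFF (t '' s) (γ ∘ Function.invFunOn t s), ⟨(hγ.1.image t).subset ?_,
    fun _ => mem_of_restrictFF_ne_none⟩, funext fun A => ?_⟩
  · intro T hT
    have hTs := mem_of_restrictFF_ne_none hT
    exact ⟨_, by simpa [restrictFF_of_mem hTs] using hT, Function.invFunOn_eq hTs⟩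
  · by_cases hA : A ∈ s
    · simp [restrictFF_of_mem hA, restrictFF_of_mem (mem_image_of_mem t hA),
        ht.leftInvOn_invFunOn hA]
    · rw [restrictFF_of_notMem hA]
      by_contra hne
      exact hA (hγ.2 A (Ne.symm hne))

lemma extFF_of_extFF_restrictFF_comp {s : Set (Set ℕ)} {t : Set ℕ → Set ℕ}
    {g g' : Set ℕ → Option Bool} (hg : FF (t '' s) g)
    (e : ExtFF (restrictFF s (g ∘ t)) (restrictFF s (g' ∘ t))) : ExtFF g g' := by
  intro T b hb
  obtain ⟨A, hA, rfl⟩ := hg.2 T (by simp [hb])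
  simpa [restrictFF_of_mem hA] using e A b (by simpa [restrictFF_of_mem hA] using hb)

lemma inter_BC_restrictFF_comp_inter {s : Set (Set ℕ)} {D : Set ℕ} {g : Set ℕ → Option Bool}
    (hg : FF ((· ∩ D) '' s) g) :
    D ∩ BC (restrictFF s (g ∘ (· ∩ D))) = D ∩ BC g := by
  ext x
  simp only [mem_inter_iff, mem_BC, and_congr_right_iff]
  intro hx
  have hrestrict : (∀ T, x ∈ literal T (g T)) ↔ ∀ T ∈ (· ∩ D) '' s, x ∈ literal T (g T) := by
    refine forall_congr' fun T => ⟨fun H _ => H, fun H => ?_⟩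
    by_cases hT : T ∈ (· ∩ D) '' s
    · exact H hT
    · rw [show g T = none by by_contra hne; exact hT (hg.2 T hne)]
      trivial
  rw [hrestrict, forall_mem_image]
  refine forall_congr' fun A => ?_
  by_cases hA : A ∈ s
  · simp [restrictFF_of_mem hA, mem_literal_inter hx, hA]
  · simp [restrictFF_of_notMem hA, hA]

lemma Cardinal.mk_sdiff_of_infinite_of_finite {α : Type*} {S T : Set α} (hS : S.Infinite)
    (hT : T.Finite) : Cardinal.mk ↥(S \ T) = Cardinal.mk S := by
  have hST : Cardinal.aleph0 ≤ Cardinal.mk ↥(S \ T) :=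
    Cardinal.infinite_iff.1 (hS.sdiff hT).to_subtype
  refine le_antisymm (Cardinal.mk_le_mk_of_subset sdiff_subset) ?_
  calc Cardinal.mk S ≤ Cardinal.mk ↥(S \ T) + Cardinal.mk T := Cardinal.le_mk_sdiff_add_mk S T
    _ = Cardinal.mk ↥(S \ T) := Cardinal.add_eq_left hST (hT.lt_aleph0.le.trans hST)

def traceFamily (I : Set (Set ℕ)) (h : Set ℕ → Option Bool) : Set (Set ℕ) :=
  (· ∩ BC h) '' (I \ {A | h A ≠ none})

section traceFamily

variable {I : Set (Set ℕ)} {h : Set ℕ → Option Bool}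

lemma injOn_inter_BC (hI : Indep I) (hh : FF I h) :
    InjOn (· ∩ BC h) (I \ {A | h A ≠ none}) := by
  rintro A ⟨hAI, hA⟩ A' ⟨hA'I, hA'⟩ heq
  replace heq : A ∩ BC h = A' ∩ BC h := heq
  simp only [mem_ofPred_eq, not_not] at hA hA'
  by_contra hne
  set γ := Function.update (Function.update h A (some false)) A' (some true)
  have hhγ : ExtFF h γ := (extFF_update hA _).trans
    (extFF_update (by rwa [Function.update_of_ne (Ne.symm hne)]) _)
  obtain ⟨x, hx⟩ := (indep_iff_forall_FF.1 hI γ (FF_update (FF_update hh hAI _) hA'I _)).nonempty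
  have hxA : x ∈ A := by simpa [γ, Function.update_of_ne hne] using mem_BC.1 hx A
  have hxA' : x ∉ A' := by simpa [γ] using mem_BC.1 hx A'
  exact hxA' (heq ▸ ⟨hxA, BC_anti hhγ hx⟩ : x ∈ A' ∩ BC h).1

lemma eq_unionFF_restrictFF {γ : Set ℕ → Option Bool} (hγ : FF I γ) (e : ExtFF h γ) :
    γ = unionFF h (restrictFF (I \ {A | h A ≠ none}) γ) := by
  funext A
  rcases hA : h A with _ | b
  · by_cases hAI : A ∈ I
    · simp [unionFF, hA, restrictFF_of_mem (show A ∈ I \ {A | h A ≠ none} by simp [hAI, hA])]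
    · rw [show γ A = none by by_contra hne; exact hAI (hγ.2 A hne)]
      simp [unionFF, hA, restrictFF_of_notMem (show A ∉ I \ {A | h A ≠ none} by simp [hAI])]
  · simp [unionFF, hA, e A b hA]

lemma BC_unionFF_restrictFF_comp {g : Set ℕ → Option Bool} (hg : FF (traceFamily I h) g) :
    BC (unionFF h (restrictFF (I \ {A | h A ≠ none}) (g ∘ (· ∩ BC h)))) = BC h ∩ BC g := by
  have hcompat : Compat h (restrictFF (I \ {A | h A ≠ none}) (g ∘ (· ∩ BC h))) := by
    intro A b₁ b₂ h₁ h₂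
    have := (mem_of_restrictFF_ne_none (h₂ ▸ Option.some_ne_none b₂)).2
    simp [h₁] at this
  rw [BC_unionFF hcompat, inter_BC_restrictFF_comp_inter hg]

lemma traceFamily_indep (hI : Indep I) (hh : FF I h) : Indep (traceFamily I h) := by
  refine indep_iff_forall_FF.2 fun g hg => ?_
  have := indep_iff_forall_FF.1 hI _
    (FF_unionFF hh ((FF_restrictFF_comp (injOn_inter_BC hI hh) hg).mono sdiff_subset))
  rw [BC_unionFF_restrictFF_comp hg] at this
  exact this.mono inter_subset_right

lemma traceFamily_infinite (hI : Indep I) (hh : FF I h) (hinf : I.Infinite) :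
    (traceFamily I h).Infinite :=
  (hinf.sdiff hh.1).image (injOn_inter_BC hI hh)

lemma mk_traceFamily (hI : Indep I) (hh : FF I h) (hinf : I.Infinite) :
    Cardinal.mk (traceFamily I h) = Cardinal.mk I := by
  rw [traceFamily, Cardinal.mk_image_eq_of_injOn _ _ (injOn_inter_BC hI hh),
    Cardinal.mk_sdiff_of_infinite_of_finite hinf hh.1]

lemma traceFamily_denselyMax (hI : Indep I) (hh : FF I h) (hinf : I.Infinite)
    (hDM : DenselyMaxBelow I h) : DenselyMax (traceFamily I h) := by
  intro X _ g hg
  have ht := injOn_inter_BC hI hh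
  obtain ⟨γ, hγ, hγ₀γ, hγX⟩ := hDM X _
    (FF_unionFF hh ((FF_restrictFF_comp ht hg).mono sdiff_subset)) (extFF_unionFF_left _ _)
  obtain ⟨g₁, hg₁, hg₁γ⟩ := exists_restrictFF_comp_eq ht (FF_restrictFF hγ.1)
  have hBCγ : BC γ = BC h ∩ BC g₁ := by
    rw [eq_unionFF_restrictFF hγ ((extFF_unionFF_left _ _).trans hγ₀γ), ← hg₁γ,
      BC_unionFF_restrictFF_comp hg₁]
  have hgg₁ : ExtFF g g₁ := by
    refine extFF_of_extFF_restrictFF_comp hg (hg₁γ ▸ fun A b hb => ?_)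
    have hA := mem_of_restrictFF_ne_none (hb ▸ Option.some_ne_none b)
    rw [restrictFF_of_mem hA]
    exact hγ₀γ A b (by simpa [unionFF, show h A = none by simpa using hA.2] using hb)
  -- make the Boolean combination lie inside `I^h` by fixing one more member of the family
  obtain ⟨_, ⟨A, hA, rfl⟩, hfresh⟩ := ((traceFamily_infinite hI hh hinf).sdiff hg₁.1).nonempty
  replace hfresh : g₁ (A ∩ BC h) = none := by simpa using hfresh
  refine ⟨Function.update g₁ (A ∩ BC h) (some false), FF_update hg₁ ⟨A, hA, rfl⟩ _,
    hgg₁.trans (extFF_update hfresh _), not_splits_iff.1 fun hs => hγX (hs.mono fun x hx => ?_)⟩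
  rw [hBCγ]
  exact ⟨(by simpa using mem_BC.1 hx (A ∩ BC h) : x ∈ A ∩ BC h).2,
    BC_anti (extFF_update hfresh _) hx⟩

end traceFamily

theorem statement15 (κ : Cardinal)
    (h : ∃ I : Set (Set ℕ), MaxIndep I ∧ Cardinal.mk I = κ) :
    ∃ J : Set (Set ℕ), Indep J ∧ DenselyMax J ∧ Cardinal.mk J = κ := by
  obtain ⟨I, hI, rfl⟩ := h
  obtain ⟨h, hh, hDM⟩ := hI.exists_denselyMaxBelow
  exact ⟨traceFamily I h, traceFamily_indep hI.1 hh,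
    traceFamily_denselyMax hI.1 hh hI.infinite hDM, mk_traceFamily hI.1 hh hI.infinite⟩
end

section
/- For every independent family I of subsets of ℕ, fil(I) is a proper filter on ℕ containing all cofinite sets: ∅ ∉ fil(I); ℕ ∈ fil(I); every cofinite subset of ℕ is in fil(I); if X ∈ fil(I) and X ⊆ Y ⊆ ℕ then Y ∈ fil(I); and if X, Y ∈ fil(I) then X ∩ Y ∈ fil(I). -/
open Set

lemma BC_infinite {I : Set (Set ℕ)} (hI : Indep I) {h : Set ℕ → Option Bool}
    (hh : FF I h) : (BC h).Infinite := by
  classical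
  obtain ⟨hfin, hmem⟩ := hh
  set S := hfin.toFinset with hS
  set 𝒜 := S.filter (fun A => h A = some false) with h𝒜
  set ℬ := S.filter (fun A => h A = some true) with hℬ
  have hsub : ((⋂ A ∈ 𝒜, A) \ (⋃ B ∈ ℬ, B)) ⊆ BC h := by
    rintro x ⟨hx1, hx2⟩
    simp only [BC, Set.mem_iInter, Set.mem_setOf_eq]
    intro A hA
    have hAS : A ∈ S := by simp [hS, hA]
    by_cases hf : h A = some false
    · rw [if_pos hf]
      exact Set.mem_iInter₂.1 hx1 A (by simp [h𝒜, hAS, hf])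
    · have ht : h A = some true := by
        rcases Option.ne_none_iff_exists'.1 hA with ⟨b, hb⟩
        cases b
        · exact absurd hb hf
        · exact hb
      rw [if_neg hf]
      intro hxA
      exact hx2 (Set.mem_iUnion₂.2 ⟨A, by simp [hℬ, hAS, ht], hxA⟩)
  refine Set.Infinite.mono hsub (hI.2 𝒜 ℬ ?_ ?_ ?_)
  · intro A hA
    simp only [h𝒜, Finset.coe_filter, Set.mem_setOf_eq] at hA
    exact hmem A (by simp [hA.2])
  · intro A hA
    simp only [hℬ, Finset.coe_filter, Set.mem_setOf_eq] at hA
    exact hmem A (by simp [hA.2])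
  · rw [Finset.disjoint_left]
    intro A hA hB
    simp only [h𝒜, hℬ, Finset.mem_filter] at hA hB
    rw [hA.2] at hB
    simp at hB

lemma BC_mono {h h' : Set ℕ → Option Bool} (he : ExtFF h h') : BC h' ⊆ BC h := by
  intro x hx
  simp only [BC, Set.mem_iInter, Set.mem_setOf_eq] at hx ⊢
  intro A hA
  rcases Option.ne_none_iff_exists'.1 hA with ⟨b, hb⟩
  have hb' := he A b hb
  have hx' := hx A (by simp [hb'])
  rw [hb'] at hx'
  rw [hb]
  exact hx'

theorem statement17 (I : Set (Set ℕ)) (hI : Indep I) :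
    ∅ ∉ densityFil I ∧ Set.univ ∈ densityFil I ∧
    (∀ X : Set ℕ, Xᶜ.Finite → X ∈ densityFil I) ∧
    (∀ X ∈ densityFil I, ∀ Y : Set ℕ, X ⊆ Y → Y ∈ densityFil I) ∧
    ∀ X ∈ densityFil I, ∀ Y ∈ densityFil I, X ∩ Y ∈ densityFil I := by
  refine ⟨?_, ?_, ?_, ?_, ?_⟩
  · intro hmem
    obtain ⟨h', hh', -, hfin⟩ := hmem (fun _ => none) ⟨by simp, by simp⟩
    exact BC_infinite hI hh' (by simpa using hfin)
  · intro h hh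
    exact ⟨h, hh, fun A b hb => hb, by simp⟩
  · intro X hX h hh
    exact ⟨h, hh, fun A b hb => hb, hX.subset fun x hx => hx.2⟩
  · intro X hX Y hXY h hh
    obtain ⟨h', hh', he, hfin⟩ := hX h hh
    exact ⟨h', hh', he, hfin.subset (Set.diff_subset_diff_right hXY)⟩
  · intro X hX Y hY h hh
    obtain ⟨h1, hh1, he1, hf1⟩ := hX h hh
    obtain ⟨h2, hh2, he2, hf2⟩ := hY h1 hh1
    refine ⟨h2, hh2, fun A b hb => he2 A b (he1 A b hb), ?_⟩
    refine (hf1.union hf2).subset ?_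
    rintro x ⟨hx, hxXY⟩
    by_cases hxX : x ∈ X
    · exact Or.inr ⟨hx, fun hxY => hxXY ⟨hxX, hxY⟩⟩
    · exact Or.inl ⟨BC_mono he2 hx, hxX⟩
end
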